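/- Let Z_ε be a centered Gaussian vector in ℝᵏ with covariance matrix I + E, where E has zero diagonal and all entries of absolute value at most ε, and let Z be a standard Gaussian vector in ℝᵏ. Then for every measurable convex set Y ⊆ ℝᵏ, |P[Z_ε ∈ Y] − P[Z ∈ Y]| = O(ε) as ε → 0 (with constant depending only on k). -/

import Mathlib

open Matrix

open MeasureTheory

/-- Density of a centered Gaussian on `ℝᵏ` with covariance matrix `S`. -/
noncomputable def gaussDensity (k : ℕ) (S : Matrix (Fin k) (Fin k) ℝ)
    (x : EuclideanSpace ℝ (Fin k)) : ℝ :=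
  (Real.sqrt ((2 * Real.pi) ^ k * S.det))⁻¹ *
    Real.exp (-(∑ i, ∑ j, x i * S⁻¹ i j * x j) / 2)

/-!
Both the normalising constant and the quadratic form move by `O(ε)`: in the Leibniz expansion of
`det (1 + E)` every term but the diagonal one contains an off-diagonal factor, and
`D = (1 + E)⁻¹ - 1` solves `D = -E - E * D`, which bounds its entries by `2ε` once `kε ≤ 1/2`.
Hence the two densities differ pointwise by `O(ε) · exp (-‖x‖² / 8)`, and integrating this bound
over all of `ℝᵏ` bounds the difference over any set `Y`.
-/

theorem abs_setIntegral_sub_le_integral {α : Type*} [MeasurableSpace α] {μ : Measure α}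
    {f g w : α → ℝ} (hf : AEStronglyMeasurable f μ) (hg : Integrable g μ) (hw : Integrable w μ)
    (hfg : ∀ x, |f x - g x| ≤ w x) (s : Set α) :
    |∫ x in s, f x ∂μ - ∫ x in s, g x ∂μ| ≤ ∫ x, w x ∂μ := by
  have hfg_int : Integrable (f - g) μ :=
    hw.mono' (hf.sub hg.aestronglyMeasurable) (ae_of_all _ hfg)
  have hf_int : Integrable f μ := by simpa using hfg_int.add hg
  rw [← integral_sub hf_int.integrableOn hg.integrableOn]
  calc _ ≤ ∫ x in s, |f x - g x| ∂μ := abs_integral_le_integral_abs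
    _ ≤ ∫ x in s, w x ∂μ := setIntegral_mono hfg_int.abs.integrableOn hw.integrableOn hfg
    _ ≤ ∫ x, w x ∂μ :=
        setIntegral_le_integral hw (ae_of_all _ fun x => (abs_nonneg _).trans (hfg x))

namespace Matrix

variable {n : Type*} [Fintype n] [DecidableEq n] {E : Matrix n n ℝ} {ε : ℝ}

theorem abs_det_one_add_sub_one_le (hdiag : ∀ i, E i i = 0) (hε₀ : 0 ≤ ε) (hε₁ : ε ≤ 1)
    (hE : ∀ i j, |E i j| ≤ ε) : |(1 + E).det - 1| ≤ (Fintype.card n).factorial * ε := by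
  have hdiag' : ∀ i, (1 + E) i i = 1 := fun i => by simp [hdiag]
  have hoff : ∀ i j, i ≠ j → (1 + E) i j = E i j := fun i j hij => by
    simp [one_apply_ne hij]
  have hentry : ∀ i j, |(1 + E) i j| ≤ 1 := fun i j => by
    rcases eq_or_ne i j with rfl | hij
    · simp [hdiag']
    · exact hoff i j hij ▸ (hE i j).trans hε₁
  have hterm : ∀ σ ∈ Finset.univ.erase (1 : Equiv.Perm n),
      |((Equiv.Perm.sign σ : ℤ) : ℝ) * ∏ i, (1 + E) (σ i) i| ≤ ε := by
    intro σ hσ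
    obtain ⟨i₀, hi₀⟩ : ∃ i, σ i ≠ i :=
      not_forall.1 fun h => (Finset.mem_erase.1 hσ).1 (Equiv.ext h)
    rw [abs_mul, ← Int.cast_abs, Equiv.Perm.sign_abs, Int.cast_one, one_mul, Finset.abs_prod,
      ← Finset.mul_prod_erase _ _ (Finset.mem_univ i₀), ← mul_one ε]
    exact mul_le_mul (hoff _ _ hi₀ ▸ hE _ _)
      (Finset.prod_le_one (fun _ _ => abs_nonneg _) fun i _ => hentry _ _)
      (Finset.prod_nonneg fun _ _ => abs_nonneg _) hε₀
  rw [det_apply', ← Finset.add_sum_erase _ _ (Finset.mem_univ 1)]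
  simp only [Equiv.Perm.sign_one, Units.val_one, Int.cast_one, Equiv.Perm.one_apply, hdiag',
    Finset.prod_const_one, one_mul, add_sub_cancel_left]
  calc _ ≤ ∑ σ ∈ Finset.univ.erase (1 : Equiv.Perm n), ε :=
        (Finset.abs_sum_le_sum_abs _ _).trans (Finset.sum_le_sum hterm)
    _ ≤ (Fintype.card n).factorial * ε := by
        rw [Finset.sum_const, nsmul_eq_mul, ← Fintype.card_perm]
        gcongr
        exact_mod_cast Finset.card_erase_le

theorem abs_inv_one_add_sub_one_apply_le (hdet : IsUnit (1 + E).det) (hE : ∀ i j, |E i j| ≤ ε)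
    (hε : Fintype.card n * ε ≤ 1 / 2) (i j : n) : |((1 + E)⁻¹ - 1) i j| ≤ 2 * ε := by
  set D := (1 + E)⁻¹ - 1
  have hD : D = -E - E * D := by
    have h : E * (1 + E)⁻¹ = 1 - (1 + E)⁻¹ := by
      have h := mul_nonsing_inv (1 + E) hdet
      rw [add_mul, one_mul] at h
      exact eq_sub_of_add_eq' h
    simp only [D, Matrix.mul_sub, mul_one, h]
    abel
  have : Nonempty (n × n) := ⟨(i, j)⟩
  obtain ⟨p, hp⟩ := Finite.exists_max fun p : n × n => |D p.1 p.2|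
  have hentry : D p.1 p.2 = -E p.1 p.2 - ∑ m, E p.1 m * D m p.2 := by
    conv_lhs => rw [hD]
    simp [mul_apply]
  have hε₀ : 0 ≤ ε := (abs_nonneg _).trans (hE i i)
  have hmax : |D p.1 p.2| ≤ ε + Fintype.card n * ε * |D p.1 p.2| := by
    calc |D p.1 p.2| ≤ |E p.1 p.2| + |∑ m, E p.1 m * D m p.2| := by
          rw [hentry, ← abs_neg (E p.1 p.2)]
          exact abs_sub _ _
      _ ≤ ε + ∑ _m : n, ε * |D p.1 p.2| := by
          refine add_le_add (hE _ _) ((Finset.abs_sum_le_sum_abs _ _).trans ?_)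
          refine Finset.sum_le_sum fun m _ => ?_
          rw [abs_mul]
          exact mul_le_mul (hE _ _) (hp (m, p.2)) (abs_nonneg _) hε₀
      _ = ε + Fintype.card n * ε * |D p.1 p.2| := by simp [mul_assoc]
  nlinarith [hp (i, j), abs_nonneg (D p.1 p.2)]

end Matrix

namespace EuclideanSpace

variable {n : Type*} [Fintype n] [DecidableEq n]

theorem sum_sum_mul_one_apply_mul (x : EuclideanSpace ℝ n) :
    ∑ i, ∑ j, x i * (1 : Matrix n n ℝ) i j * x j = ‖x‖ ^ 2 := by
  rw [EuclideanSpace.norm_sq_eq]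
  simp [Matrix.one_apply, sq]

theorem abs_sum_sum_mul_apply_mul_sub_norm_sq_le {S : Matrix n n ℝ} {δ : ℝ}
    (hS : ∀ i j, |(S - 1) i j| ≤ δ) (x : EuclideanSpace ℝ n) :
    |∑ i, ∑ j, x i * S i j * x j - ‖x‖ ^ 2| ≤ Fintype.card n * δ * ‖x‖ ^ 2 := by
  rcases isEmpty_or_nonempty n with hn | ⟨⟨i₀⟩⟩
  · simp [EuclideanSpace.norm_eq]
  have hδ : 0 ≤ δ := (abs_nonneg _).trans (hS i₀ i₀)
  conv_lhs => rw [← sum_sum_mul_one_apply_mul x, ← Finset.sum_sub_distrib]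
  calc |∑ i, (∑ j, x i * S i j * x j - ∑ j, x i * (1 : Matrix n n ℝ) i j * x j)|
      ≤ ∑ i, ∑ j, |x i| * δ * |x j| := by
        refine (Finset.abs_sum_le_sum_abs _ _).trans (Finset.sum_le_sum fun i _ => ?_)
        rw [← Finset.sum_sub_distrib]
        refine (Finset.abs_sum_le_sum_abs _ _).trans (Finset.sum_le_sum fun j _ => ?_)
        rw [← sub_mul, ← mul_sub, ← Matrix.sub_apply, abs_mul, abs_mul]
        gcongr
        exact hS i j
    _ = δ * (∑ i, |x i|) ^ 2 := by
        rw [sq, Finset.sum_mul_sum, Finset.mul_sum]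
        refine Finset.sum_congr rfl fun i _ => ?_
        rw [Finset.mul_sum]
        exact Finset.sum_congr rfl fun j _ => by ring
    _ ≤ δ * (Fintype.card n * ∑ i, |x i| ^ 2) := by
        gcongr
        exact sq_sum_le_card_mul_sum_sq
    _ = Fintype.card n * δ * ‖x‖ ^ 2 := by
        simp only [sq_abs, EuclideanSpace.norm_sq_eq, Real.norm_eq_abs]
        ring

end EuclideanSpace

namespace Real

theorem abs_inv_sqrt_sub_one_le {d : ℝ} (hd : 1 / 2 ≤ d) : |(√d)⁻¹ - 1| ≤ 2 * |d - 1| := by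
  have hs : 0 < √d := sqrt_pos.2 (by linarith)
  have hsq : √d ^ 2 = d := sq_sqrt (by linarith)
  have hsum : 1 / 2 ≤ √d + d := by linarith
  rw [show (√d)⁻¹ - 1 = -(d - 1) / (√d + d) by field_simp; nlinarith, abs_div, abs_neg,
    abs_of_pos (by linarith : 0 < √d + d), div_le_iff₀ (by linarith)]
  nlinarith [abs_nonneg (d - 1)]

theorem abs_exp_neg_sub_exp_neg_le {a b m : ℝ} (ha : m ≤ a) (hb : m ≤ b) :
    |exp (-a) - exp (-b)| ≤ |a - b| * exp (-m) := by
  have key : ∀ a b, m ≤ b → exp (-b) - exp (-a) ≤ |a - b| * exp (-m) := fun a b hb =>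
    calc exp (-b) - exp (-a) = exp (-b) * (1 - exp (b - a)) := by
          rw [mul_sub, ← exp_add]; ring_nf
      _ ≤ exp (-b) * |a - b| := by
          gcongr; linarith [add_one_le_exp (b - a), le_abs_self (a - b)]
      _ ≤ |a - b| * exp (-m) := by rw [mul_comm]; gcongr
  exact abs_sub_le_iff.2 ⟨abs_sub_comm a b ▸ key b a ha, key a b hb⟩

theorem abs_inv_sqrt_mul_exp_sub_exp_le {d q B δ₁ δ₂ : ℝ} (hd : |d - 1| ≤ δ₁) (hδ₁ : δ₁ ≤ 1 / 2)
    (hB : 0 ≤ B) (hq : |q - B| ≤ δ₂ * B) (hδ₂₀ : 0 ≤ δ₂) (hδ₂ : δ₂ ≤ 1 / 2) :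
    |(√d)⁻¹ * exp (-(q / 2)) - exp (-(B / 2))| ≤ (2 * δ₁ + 4 * δ₂) * exp (-(B / 8)) := by
  have hqB : B / 2 ≤ q := by nlinarith [(abs_le.1 hq).1]
  have hexp_q : exp (-(q / 2)) ≤ exp (-(B / 8)) := exp_le_exp.2 (by linarith)
  have hdet : |(√d)⁻¹ - 1| ≤ 2 * δ₁ :=
    (abs_inv_sqrt_sub_one_le (by linarith [(abs_le.1 hd).1])).trans (by linarith)
  have hdiff : |exp (-(q / 2)) - exp (-(B / 2))| ≤ 4 * δ₂ * exp (-(B / 8)) := by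
    have hpoly : B * exp (-(B / 4)) ≤ 8 * exp (-(B / 8)) := by
      calc B * exp (-(B / 4)) ≤ 8 * exp (B / 8) * exp (-(B / 4)) := by
            gcongr; linarith [add_one_le_exp (B / 8)]
        _ = 8 * exp (-(B / 8)) := by rw [mul_assoc, ← exp_add]; ring_nf
    calc |exp (-(q / 2)) - exp (-(B / 2))| ≤ |q / 2 - B / 2| * exp (-(B / 4)) :=
          abs_exp_neg_sub_exp_neg_le (by linarith) (by linarith)
      _ ≤ δ₂ / 2 * (B * exp (-(B / 4))) := by
          rw [← sub_div, abs_div, abs_two, ← mul_assoc]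
          gcongr
          linarith
      _ ≤ 4 * δ₂ * exp (-(B / 8)) := by nlinarith
  calc |(√d)⁻¹ * exp (-(q / 2)) - exp (-(B / 2))|
      = |((√d)⁻¹ - 1) * exp (-(q / 2)) + (exp (-(q / 2)) - exp (-(B / 2)))| := by ring_nf
    _ ≤ 2 * δ₁ * exp (-(B / 8)) + 4 * δ₂ * exp (-(B / 8)) := by
        refine (abs_add_le _ _).trans (add_le_add ?_ hdiff)
        rw [abs_mul, abs_of_pos (exp_pos _)]
        exact mul_le_mul hdet hexp_q (exp_pos _).le (by linarith [abs_nonneg ((√d)⁻¹ - 1)])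
    _ = (2 * δ₁ + 4 * δ₂) * exp (-(B / 8)) := by ring

end Real

theorem GaussianFourier.integrable_rexp_neg_mul_sq_norm {V : Type*} [NormedAddCommGroup V]
    [InnerProductSpace ℝ V] [FiniteDimensional ℝ V] [MeasurableSpace V] [BorelSpace V] {b : ℝ}
    (hb : 0 < b) : Integrable fun v : V => Real.exp (-b * ‖v‖ ^ 2) :=
  .of_integral_ne_zero (by rw [integral_rexp_neg_mul_sq_norm hb]; positivity)

theorem continuous_gaussDensity (k : ℕ) (S : Matrix (Fin k) (Fin k) ℝ) :
    Continuous (gaussDensity k S) := by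
  unfold gaussDensity
  fun_prop

theorem integrable_gaussDensity_one (k : ℕ) : Integrable (gaussDensity k 1) := by
  have h : gaussDensity k 1 =
      fun x => (√((2 * Real.pi) ^ k))⁻¹ * Real.exp (-(1 / 2) * ‖x‖ ^ 2) := by
    ext x
    rw [gaussDensity, det_one, mul_one, inv_one, EuclideanSpace.sum_sum_mul_one_apply_mul]
    ring_nf
  rw [h]
  exact (GaussianFourier.integrable_rexp_neg_mul_sq_norm (by norm_num)).const_mul _

theorem abs_gaussDensity_one_add_sub_le {k : ℕ} {E : Matrix (Fin k) (Fin k) ℝ} {ε : ℝ}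
    (hε : 0 ≤ ε) (hsmall : (k.factorial + k) * ε ≤ 1 / 4) (hdiag : ∀ i, E i i = 0)
    (hE : ∀ i j, |E i j| ≤ ε) (x : EuclideanSpace ℝ (Fin k)) :
    |gaussDensity k (1 + E) x - gaussDensity k 1 x| ≤
      ε * ((2 * k.factorial + 8 * k) * (√((2 * Real.pi) ^ k))⁻¹ *
        Real.exp (-(1 / 8) * ‖x‖ ^ 2)) := by
  have hfact : (1 : ℝ) ≤ k.factorial := mod_cast k.factorial_pos
  have hdet : |(1 + E).det - 1| ≤ k.factorial * ε := by
    simpa using abs_det_one_add_sub_one_le hdiag hε (by nlinarith) hE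
  have hunit : IsUnit (1 + E).det :=
    isUnit_iff_ne_zero.2 (by nlinarith [(abs_le.1 hdet).1] : (0 : ℝ) < (1 + E).det).ne'
  have hinv := abs_inv_one_add_sub_one_apply_le hunit hE (by simp; nlinarith)
  have hform := EuclideanSpace.abs_sum_sum_mul_apply_mul_sub_norm_sq_le hinv x
  rw [Fintype.card_fin, ← mul_assoc] at hform
  have hcore := Real.abs_inv_sqrt_mul_exp_sub_exp_le hdet (by nlinarith) (sq_nonneg ‖x‖) hform
    (by positivity) (by nlinarith)
  have hc : 0 ≤ (√((2 * Real.pi) ^ k))⁻¹ := by positivity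
  rw [gaussDensity, gaussDensity, det_one, mul_one, inv_one,
    EuclideanSpace.sum_sum_mul_one_apply_mul, Real.sqrt_mul (by positivity), mul_inv, neg_div,
    neg_div, mul_assoc, ← mul_sub, abs_mul, abs_of_nonneg hc]
  calc _ ≤ (√((2 * Real.pi) ^ k))⁻¹ * ((2 * (k.factorial * ε) + 4 * (k * 2 * ε)) *
        Real.exp (-(‖x‖ ^ 2 / 8))) := by gcongr
    _ = _ := by ring_nf

/-- Comparison of the centered Gaussian with covariance `I + E` (where `E` has zero
diagonal and entries of absolute value at most `ε`) with the standard Gaussian: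
over every measurable convex set the probabilities differ by `O(ε)` as `ε → 0`,
with constant depending only on `k`. -/
theorem gaussian_near_identity_comparison (k : ℕ) :
    ∃ C > (0 : ℝ), ∃ ε₀ > (0 : ℝ), ∀ ε : ℝ, 0 < ε → ε ≤ ε₀ →
      ∀ E : Matrix (Fin k) (Fin k) ℝ, Eᵀ = E → (∀ i, E i i = 0) →
        (∀ i j, |E i j| ≤ ε) → (1 + E).PosDef →
        ∀ Y : Set (EuclideanSpace ℝ (Fin k)), MeasurableSet Y → Convex ℝ Y →
          |(∫ x in Y, gaussDensity k (1 + E) x) - ∫ x in Y, gaussDensity k 1 x| ≤ C * ε := by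
  have hI : ∫ x : EuclideanSpace ℝ (Fin k), Real.exp (-(1 / 8) * ‖x‖ ^ 2) =
      (Real.pi / (1 / 8)) ^ (k / 2 : ℝ) := by
    rw [GaussianFourier.integral_rexp_neg_mul_sq_norm (by norm_num), finrank_euclideanSpace_fin]
  refine ⟨(2 * k.factorial + 8 * k) * (√((2 * Real.pi) ^ k))⁻¹ * (Real.pi / (1 / 8)) ^ (k / 2 : ℝ),
    by positivity, (4 * (k.factorial + k))⁻¹, by positivity, ?_⟩
  intro ε hε hεε₀ E _ hdiag hE _ Y _ _
  have hsmall : (k.factorial + k : ℝ) * ε ≤ 1 / 4 :=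
    calc (k.factorial + k : ℝ) * ε ≤ (k.factorial + k) * (4 * (k.factorial + k : ℝ))⁻¹ := by gcongr
      _ = 1 / 4 := by field_simp
  calc _ ≤ ∫ x, ε * ((2 * k.factorial + 8 * k) * (√((2 * Real.pi) ^ k))⁻¹ *
          Real.exp (-(1 / 8) * ‖x‖ ^ 2)) :=
        abs_setIntegral_sub_le_integral (continuous_gaussDensity k _).aestronglyMeasurable
          (integrable_gaussDensity_one k)
          ((GaussianFourier.integrable_rexp_neg_mul_sq_norm (by norm_num)).const_mul _
            |>.const_mul _)
          (abs_gaussDensity_one_add_sub_le hε.le hsmall hdiag hE) Y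
    _ = _ := by rw [integral_const_mul, integral_const_mul, hI]; ring
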